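/- For every n ≥ 1 and m ≥ 1, and every tree T_n on n vertices, r(T_n, K_m) = (n-1)(m-1) + 1. -/

import Mathlib

open SimpleGraph Finset

/-- The graph `C` contains a copy of `G` (as a subgraph, via an injective map). -/
def ContainsCopy {V W : Type*} (C : SimpleGraph V) (G : SimpleGraph W) : Prop :=
  ∃ f : W ↪ V, ∀ u v : W, G.Adj u v → C.Adj (f u) (f v)

/-- `N` has the Ramsey property for `(G, H)`: every red-blue coloring of the edges of `K_N`
(given by the red graph `C`) contains a red copy of `G` or a blue copy of `H`. -/
def IsRamsey {α β : Type*} (G : SimpleGraph α) (H : SimpleGraph β) (N : ℕ) : Prop :=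
  ∀ C : SimpleGraph (Fin N), ContainsCopy C G ∨ ContainsCopy Cᶜ H

/-- The Ramsey number `r(G, H)`. -/
noncomputable def ramsey {α β : Type*} (G : SimpleGraph α) (H : SimpleGraph β) : ℕ :=
  sInf {N | IsRamsey G H N}

/-- The disjoint union of `t` copies of `H`. -/
def tCopies (t : ℕ) {β : Type*} (H : SimpleGraph β) : SimpleGraph (Fin t × β) where
  Adj a b := a.1 = b.1 ∧ H.Adj a.2 b.2
  symm := ⟨fun _ _ h => ⟨h.1.symm, h.2.symm⟩⟩
  loopless := ⟨fun _ h => H.irrefl h.2⟩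

/-!
Upper bound (Chvátal): induct on `m`. If every vertex has red degree at least `n - 1`, any tree on
`n` vertices embeds greedily, leaf by leaf, since the already embedded vertices can never exhaust
the neighbourhood of the attachment vertex. Otherwise some vertex has at least
`(n - 1) * (m - 1) + 1` blue neighbours, and by induction these contain a red tree or a blue
`K_{m-1}`, which that vertex extends to a blue `K_m`.

Lower bound: colour red exactly the edges inside `m - 1` disjoint blocks of size `n - 1`. A red
tree is connected, so it lies in one block and has at most `n - 1` vertices, while a blue clique
meets every block at most once.
-/

namespace SimpleGraph

variable {V W : Type*}

theorem containsCopy_iff_isContained (C : SimpleGraph V) (G : SimpleGraph W) :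
    ContainsCopy C G ↔ G ⊑ C :=
  isContained_iff_exists_le_comap.symm

lemma isContained_of_copy_induce_compl_leaf {T : SimpleGraph V} {G : SimpleGraph W} {v u : V}
    (hvu : ∀ x, T.Adj v x ↔ x = u) (hu : u ≠ v) (f : Copy (T.induce {v}ᶜ) G) {w : W}
    (hw : G.Adj (f ⟨u, hu⟩) w) (hwf : w ∉ Set.range f) : T ⊑ G := by
  classical
  let g : V → W := fun x => if h : x = v then w else f ⟨x, h⟩
  have hg_inj : Function.Injective g := by
    intro a b hab
    by_cases ha : a = v <;> by_cases hb : b = v <;>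
      simp only [g, ha, hb, dite_true, dite_false] at hab
    · exact ha.trans hb.symm
    · exact (hwf ⟨_, hab.symm⟩).elim
    · exact (hwf ⟨_, hab⟩).elim
    · exact congrArg Subtype.val (f.injective hab)
  refine ⟨⟨⟨g, fun {a b} hab => ?_⟩, hg_inj⟩⟩
  by_cases ha : a = v <;> by_cases hb : b = v
  · exact (hab.ne (ha.trans hb.symm)).elim
  · subst ha
    obtain rfl := (hvu b).1 hab
    simpa [g, hb] using hw.symm
  · subst hb
    obtain rfl := (hvu a).1 hab.symm
    simpa [g, ha] using hw
  · simpa [g, ha, hb] using f.toHom.map_adj (show (T.induce {v}ᶜ).Adj ⟨a, ha⟩ ⟨b, hb⟩ from hab)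

theorem IsTree.isContained_of_forall_le_degree [Fintype V] [Fintype W] [Nonempty W]
    {G : SimpleGraph W} [DecidableRel G.Adj] {T : SimpleGraph V} (hT : T.IsTree)
    (hG : ∀ w, Fintype.card V - 1 ≤ G.degree w) : T ⊑ G := by
  refine Fintype.induction_subsingleton_or_nontrivial (P := fun V _ => ∀ T : SimpleGraph V,
    T.IsTree → (∀ w, Fintype.card V - 1 ≤ G.degree w) → T ⊑ G) V ?_ ?_ T hT hG
  · intro V _ _ T _ _
    refine IsContained.mono_left (A' := ⊥) (fun a b hab => hab.ne (Subsingleton.elim a b)) ?_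
    exact bot_isContained_iff_card_le.2 (Fintype.card_le_one_iff_subsingleton.2 ‹_› |>.trans
      Fintype.card_pos)
  intro V _ _ ih T hT hG
  classical
  obtain ⟨v, hv⟩ := hT.exists_vert_degree_one_of_nontrivial
  obtain ⟨u, hvu, hu⟩ := degree_eq_one_iff_existsUnique_adj.1 hv
  have hV := Fintype.one_lt_card (α := V)
  have hcard : Fintype.card ({v}ᶜ : Set V) = Fintype.card V - 1 := by
    rw [Fintype.card_compl_set, Set.card_singleton]
  obtain ⟨f⟩ := ih _ (by omega)
    _ ⟨hT.connected.induce_compl_singleton_of_degree_eq_one hv, hT.isAcyclic.induce _⟩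
    (fun w => by rw [hcard]; exact (hG w).trans' (by omega))
  set fu := f ⟨u, hvu.ne'⟩
  -- `f` occupies only `card V - 2` vertices besides `fu`, fewer than the neighbours of `fu`.
  obtain ⟨w, hw, hwf⟩ := exists_mem_notMem_of_card_lt_card
    (s := (univ.image f).erase fu) (t := G.neighborFinset fu) (by
      rw [card_neighborFinset_eq_degree, card_erase_of_mem (mem_image_of_mem f (mem_univ _)),
        card_image_of_injective (f := ⇑f) _ f.injective, card_univ, hcard]
      exact (hG fu).trans_lt' (by omega))
  refine isContained_of_copy_induce_compl_leaf (fun x => ⟨hu x, ?_⟩) hvu.ne' f (w := w)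
    (by simpa using hw) ?_
  · rintro rfl; exact hvu
  · rintro ⟨x, rfl⟩
    exact hwf (mem_erase.2 ⟨((mem_neighborFinset _ _ _).1 hw).ne', by simp⟩)

lemma compl_induce (G : SimpleGraph V) (s : Set V) : (G.induce s)ᶜ = Gᶜ.induce s := by
  ext a b
  simp [Subtype.ext_iff]

lemma not_cliqueFree_succ_of_not_cliqueFree_induce_neighborSet {G : SimpleGraph V} {v : V}
    {n : ℕ} (h : ¬(G.induce (G.neighborSet v)).CliqueFree n) : ¬G.CliqueFree (n + 1) := by
  classical
  obtain ⟨s, hs⟩ := not_forall_not.1 h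
  have hs' : G.IsNClique n (s.map (Function.Embedding.subtype _)) :=
    hs.map.mono (map_comap_le _ _)
  exact fun hG => hG _ (hs'.insert (a := v) (by simp +contextual))

theorem IsTree.isContained_or_not_cliqueFree_compl [Fintype V] [Fintype W] {T : SimpleGraph V}
    (hT : T.IsTree) (m : ℕ) (C : SimpleGraph W)
    (hW : (Fintype.card V - 1) * m + 1 ≤ Fintype.card W) : T ⊑ C ∨ ¬Cᶜ.CliqueFree (m + 1) := by
  classical
  induction m generalizing W with
  | zero =>
    right
    rw [cliqueFree_one, not_isEmpty_iff]
    exact Fintype.card_pos_iff.1 (by omega)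
  | succ m ih =>
    by_cases hdeg : ∀ w, Fintype.card V - 1 ≤ C.degree w
    · have : Nonempty W := Fintype.card_pos_iff.1 (by omega)
      exact .inl (hT.isContained_of_forall_le_degree hdeg)
    obtain ⟨v, hv⟩ := not_forall.1 hdeg
    have hB : (Fintype.card V - 1) * m + 1 ≤ Fintype.card (Cᶜ.neighborSet v) := by
      rw [card_neighborSet_eq_degree, degree_compl]
      rw [Nat.mul_succ] at hW
      omega
    refine (ih (C.induce (Cᶜ.neighborSet v)) hB).imp
      (fun h => h.trans (Copy.induce C _).isContained) fun h => ?_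
    rw [compl_induce] at h
    exact not_cliqueFree_succ_of_not_cliqueFree_induce_neighborSet h

lemma Preconnected.eq_of_forall_adj {α : Type*} {G : SimpleGraph V} (hG : G.Preconnected)
    {f : V → α} (hf : ∀ a b, G.Adj a b → f a = f b) (a b : V) : f a = f b := by
  obtain ⟨p⟩ := hG a b
  induction p with
  | nil => rfl
  | cons h _ ih => exact (hf _ _ h).trans ih

lemma Preconnected.card_le_of_isContained_tCopies {β : Type*} [Fintype V] [Fintype β] {t : ℕ}
    {T : SimpleGraph V} {H : SimpleGraph β} (hT : T.Preconnected) (h : T ⊑ tCopies t H) :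
    Fintype.card V ≤ Fintype.card β := by
  obtain ⟨f⟩ := h
  have hfst := hT.eq_of_forall_adj (f := fun a => (f a).1) fun a b hab => (f.toHom.map_adj hab).1
  exact Fintype.card_le_of_injective (fun a => (f a).2) fun a b hab =>
    f.injective (Prod.ext (hfst a b) hab)

lemma cliqueFree_compl_tCopies_top (t : ℕ) (β : Type*) :
    (tCopies t (⊤ : SimpleGraph β))ᶜ.CliqueFree (t + 1) := by
  intro s hs
  have hfst : Set.InjOn Prod.fst (s : Set (Fin t × β)) := by
    intro a ha b hb hab
    by_contra hne
    exact (hs.1 ha hb hne).2 ⟨hab, fun h => hne (Prod.ext hab h)⟩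
  have := Finset.card_le_card_of_injOn Prod.fst (fun _ _ => Finset.mem_univ _) hfst
  simp only [Finset.card_univ, Fintype.card_fin, hs.2] at this
  omega

end SimpleGraph

section Ramsey
variable {α β W : Type*} {G : SimpleGraph α} {H : SimpleGraph β}

lemma ramsey_eq_of_isRamsey_of_forall_lt {k : ℕ} (h : IsRamsey G H k)
    (hlt : ∀ N < k, ¬IsRamsey G H N) : ramsey G H = k :=
  le_antisymm (Nat.sInf_le h) (le_csInf ⟨k, h⟩ fun N hN => not_lt.1 fun hNk => hlt N hNk hN)

lemma not_isRamsey_of_le_card [Fintype W] (D : SimpleGraph W) (hG : ¬G ⊑ D) (hH : ¬H ⊑ Dᶜ)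
    {N : ℕ} (hN : N ≤ Fintype.card W) : ¬IsRamsey G H N := by
  intro hR
  obtain ⟨ι⟩ : Nonempty (Fin N ↪ W) := Function.Embedding.nonempty_of_card_le (by simpa)
  rcases hR (D.comap ι) with h | h <;> rw [containsCopy_iff_isContained] at h
  · exact hG (h.trans (Embedding.comap ι D).isContained)
  · exact hH (h.trans ⟨⟨⟨ι, fun hab => ⟨ι.injective.ne hab.1, hab.2⟩⟩, ι.injective⟩⟩)

end Ramsey

theorem stmt10_general {V : Type*} [Fintype V] (T : SimpleGraph V) (n m : ℕ)
    (hm : 1 ≤ m) (hcard : Fintype.card V = n) (hT : T.IsTree) :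
    ramsey T (⊤ : SimpleGraph (Fin m)) = (n - 1) * (m - 1) + 1 := by
  obtain ⟨m, rfl⟩ : ∃ k, m = k + 1 := ⟨m - 1, by omega⟩
  subst hcard
  refine ramsey_eq_of_isRamsey_of_forall_lt (fun C => ?_) fun N hN => ?_
  · rw [containsCopy_iff_isContained, containsCopy_iff_isContained,
      ← not_cliqueFree_iff_top_isContained]
    exact hT.isContained_or_not_cliqueFree_compl m C (by simp)
  · have hV : 0 < Fintype.card V := Fintype.card_pos_iff.2 hT.connected.nonempty
    refine not_isRamsey_of_le_card (tCopies m (⊤ : SimpleGraph (Fin (Fintype.card V - 1))))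
      (fun h => ?_) ?_ ?_
    · have := hT.connected.preconnected.card_le_of_isContained_tCopies h
      simp only [Fintype.card_fin] at this
      omega
    · rw [← not_cliqueFree_iff_top_isContained, not_not]
      exact cliqueFree_compl_tCopies_top m _
    · simp only [Fintype.card_prod, Fintype.card_fin, Nat.add_sub_cancel] at hN ⊢
      lia

theorem stmt10 {V : Type*} [Fintype V] (T : SimpleGraph V) (n m : ℕ)
    (hn : 1 ≤ n) (hm : 1 ≤ m) (hcard : Fintype.card V = n) (hT : T.IsTree) :
    ramsey T (⊤ : SimpleGraph (Fin m)) = (n - 1) * (m - 1) + 1 :=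
  stmt10_general T n m hm hcard hT
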